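/- arXiv:2204.03443 — 4 statements merged into one kernel-verified Lean document; each statement's English description precedes it below -/
import Mathlib

section
/- There is a constant C ≥ 1 such that for all x ∈ ℝ^N and r > 0 one has C⁻¹ · w(B(x,r)) ≤ r^N · ∏_{α∈R} (|⟨x,α⟩| + r)^{k(α)} ≤ C · w(B(x,r)). -/
open scoped RealInnerProductSpace ENNReal
open MeasureTheory Filter Topology

noncomputable section

/-- The reflection `σ_α(x) = x − 2(⟨x,α⟩/‖α‖²)α` in the hyperplane orthogonal to `α`. -/
def dunklReflection {N : ℕ} (α x : EuclideanSpace ℝ (Fin N)) : EuclideanSpace ℝ (Fin N) :=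
  x - (2 * ⟪x, α⟫ / ‖α‖ ^ 2) • α

/-- `R` is a normalized root system: `R ∩ ℝα = {α, −α}`, `σ_α(R) = R`, `‖α‖ = √2`
for every `α ∈ R` (and `0 ∉ R`). -/
def IsNormalizedRootSystem {N : ℕ} (R : Finset (EuclideanSpace ℝ (Fin N))) : Prop :=
  (0 : EuclideanSpace ℝ (Fin N)) ∉ R ∧
  (∀ α ∈ R, ∀ β ∈ R, (∃ c : ℝ, β = c • α) → β = α ∨ β = -α) ∧
  (∀ α ∈ R, -α ∈ R) ∧
  (∀ α ∈ R, dunklReflection α '' (R : Set (EuclideanSpace ℝ (Fin N)))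
      = (R : Set (EuclideanSpace ℝ (Fin N)))) ∧
  (∀ α ∈ R, ‖α‖ = Real.sqrt 2)

/-- The group `G` generated by the reflections `σ_α`, `α ∈ R`, viewed as a subgroup of the
orthogonal group (group of linear isometries) of `ℝ^N`. -/
def reflGroup {N : ℕ} (R : Finset (EuclideanSpace ℝ (Fin N))) :
    Subgroup (EuclideanSpace ℝ (Fin N) ≃ₗᵢ[ℝ] EuclideanSpace ℝ (Fin N)) :=
  Subgroup.closure {g | ∃ α ∈ R, ∀ x, g x = dunklReflection α x}

/-- The orbit distance `d(x,y) = min {‖x − σ(y)‖ : σ ∈ G}`. -/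
def orbitDist {N : ℕ} (R : Finset (EuclideanSpace ℝ (Fin N)))
    (x y : EuclideanSpace ℝ (Fin N)) : ℝ :=
  sInf {r | ∃ σ ∈ reflGroup R, r = ‖x - σ y‖}

/-- `σ_𝛂 = σ_{α_m} ∘ ⋯ ∘ σ_{α_1}` for `𝛂 = (α_1, …, α_m)`. -/
def reflSeq {N : ℕ} : List (EuclideanSpace ℝ (Fin N)) → EuclideanSpace ℝ (Fin N) →
    EuclideanSpace ℝ (Fin N)
  | [], y => y
  | a :: l, y => reflSeq l (dunklReflection a y)

/-- `ρ_𝛂(x,y,t) = ∏_{j=0}^{m−1} (1 + ‖x − σ_{α_j}∘⋯∘σ_{α_1}(y)‖/√t)^{−2}`. -/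
def rhoSeq {N : ℕ} (x : EuclideanSpace ℝ (Fin N)) (t : ℝ) :
    List (EuclideanSpace ℝ (Fin N)) → EuclideanSpace ℝ (Fin N) → ℝ
  | [], _ => 1
  | a :: l, y => ((1 + ‖x - y‖ / Real.sqrt t) ^ 2)⁻¹ * rhoSeq x t l (dunklReflection a y)

/-- `𝛂` is admissible for `(x,y)`: `d(x, σ_𝛂(y)) = ‖x − σ_𝛂(y)‖`. -/
def IsAdmissible {N : ℕ} (R : Finset (EuclideanSpace ℝ (Fin N)))
    (x y : EuclideanSpace ℝ (Fin N)) (l : List (EuclideanSpace ℝ (Fin N))) : Prop :=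
  orbitDist R x (reflSeq l y) = ‖x - reflSeq l y‖

/-- `Λ_B(x,y,t) = Σ_{𝛂 ∈ 𝒜(x,y), ℓ(𝛂) ≤ B} ρ_𝛂(x,y,t)` (a finite sum, written as a `tsum`
over the finite type of admissible sequences of roots of length at most `B`). -/
def LambdaFn {N : ℕ} (R : Finset (EuclideanSpace ℝ (Fin N))) (B : ℕ)
    (x y : EuclideanSpace ℝ (Fin N)) (t : ℝ) : ℝ :=
  ∑' l : {l : List (EuclideanSpace ℝ (Fin N)) //
      (∀ a ∈ l, a ∈ R) ∧ l.length ≤ B ∧ IsAdmissible R x y l},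
    rhoSeq x t l.1 y

/-- The density `w(x) = ∏_{α∈R} |⟨x,α⟩|^{k(α)}`. -/
def wDensity {N : ℕ} (R : Finset (EuclideanSpace ℝ (Fin N)))
    (k : EuclideanSpace ℝ (Fin N) → ℝ) (x : EuclideanSpace ℝ (Fin N)) : ℝ :=
  ∏ α ∈ R, |⟪x, α⟫| ^ (k α)

/-- The measure `dw(x) = w(x) dx`. -/
def wMeasure {N : ℕ} (R : Finset (EuclideanSpace ℝ (Fin N)))
    (k : EuclideanSpace ℝ (Fin N) → ℝ) : Measure (EuclideanSpace ℝ (Fin N)) :=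
  volume.withDensity fun x => ENNReal.ofReal (wDensity R k x)

private lemma auxExistsPosLe {ι : Type*} (s : Finset ι) (f : ι → ℝ) :
    (∀ a ∈ s, 0 < f a) → ∃ c : ℝ, 0 < c ∧ ∀ a ∈ s, c ≤ f a := by
  classical
  induction s using Finset.induction with
  | empty => exact fun _ => ⟨1, one_pos, fun a ha => absurd ha (Finset.notMem_empty a)⟩
  | @insert a s ha ih =>
    intro h
    obtain ⟨c, hc, hcf⟩ := ih fun b hb => h b (Finset.mem_insert_of_mem hb)
    refine ⟨min c (f a), lt_min hc (h a (Finset.mem_insert_self a s)), fun b hb => ?_⟩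
    rcases Finset.mem_insert.1 hb with rfl | hb
    · exact min_le_right _ _
    · exact (min_le_left _ _).trans (hcf b hb)

private lemma auxExistsV {N : ℕ} (R : Finset (EuclideanSpace ℝ (Fin N)))
    (hR0 : (0 : EuclideanSpace ℝ (Fin N)) ∉ R) :
    ∃ v : EuclideanSpace ℝ (Fin N), ‖v‖ ≤ 1 ∧ ∀ α ∈ R, ⟪v, α⟫ ≠ 0 := by
  classical
  have hS : volume (⋃ α ∈ (R : Set (EuclideanSpace ℝ (Fin N))),
      {y : EuclideanSpace ℝ (Fin N) | ⟪y, α⟫ = 0}) = 0 := by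
    rw [measure_biUnion_null_iff R.countable_toSet]
    intro α hα
    have hα0 : α ≠ 0 := fun h => hR0 (by simpa [h] using hα)
    have hker : {y : EuclideanSpace ℝ (Fin N) | ⟪y, α⟫ = 0}
        = (LinearMap.ker ((innerSL ℝ α :
            EuclideanSpace ℝ (Fin N) →L[ℝ] ℝ)).toLinearMap : Set _) := by
      ext y
      simp only [Set.mem_setOf_eq, SetLike.mem_coe, LinearMap.mem_ker,
        ContinuousLinearMap.coe_coe, innerSL_apply_apply]
      rw [real_inner_comm]
    rw [hker]
    refine Measure.addHaar_submodule volume _ (fun htop => hα0 ?_)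
    have hm : α ∈ LinearMap.ker ((innerSL ℝ α :
        EuclideanSpace ℝ (Fin N) →L[ℝ] ℝ)).toLinearMap := htop ▸ Submodule.mem_top
    have h0 : ⟪α, α⟫ = 0 := hm
    exact inner_self_eq_zero.mp h0
  have hpos : volume (Metric.ball (0 : EuclideanSpace ℝ (Fin N)) 1 \
      ⋃ α ∈ (R : Set (EuclideanSpace ℝ (Fin N))),
        {y : EuclideanSpace ℝ (Fin N) | ⟪y, α⟫ = 0}) ≠ 0 := by
    rw [measure_diff_null hS]
    exact (Metric.measure_ball_pos volume _ one_pos).ne'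
  obtain ⟨v, hv1, hv2⟩ := nonempty_of_measure_ne_zero hpos
  refine ⟨v, le_of_lt (mem_ball_zero_iff.1 hv1), fun α hα => fun h0 => ?_⟩
  exact hv2 (Set.mem_biUnion hα h0)

private lemma auxExistsT {N : ℕ} (R : Finset (EuclideanSpace ℝ (Fin N)))
    (v : EuclideanSpace ℝ (Fin N)) (c₀ ε : ℝ) (hc₀ : 0 < c₀)
    (hvlow : ∀ α ∈ R, c₀ ≤ |⟪v, α⟫|) (hvup : ∀ α ∈ R, |⟪v, α⟫| ≤ Real.sqrt 2)
    (hε0 : 0 < ε) (hε1 : ε ≤ 1 / 3) (hε2 : ε ≤ c₀ / (24 * ((R.card : ℝ) + 1)))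
    (x : EuclideanSpace ℝ (Fin N)) (r : ℝ) (hr : 0 < r) :
    ∃ t ∈ Set.Icc (0:ℝ) (r / 2), ∀ α ∈ R, ε * (|⟪x, α⟫| + r) ≤ |⟪x, α⟫ + t * ⟪v, α⟫| := by
  classical
  have hsqrt2 : Real.sqrt 2 ≤ 3 / 2 := by
    nlinarith [Real.sq_sqrt (show (0:ℝ) ≤ 2 by norm_num), Real.sqrt_nonneg 2]
  by_contra hcon
  push_neg at hcon
  have hsub : Set.Icc (0:ℝ) (r/2) ⊆ ⋃ α ∈ (R : Set (EuclideanSpace ℝ (Fin N))),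
      ({t : ℝ | |⟪x, α⟫ + t * ⟪v, α⟫| < ε * (|⟪x, α⟫| + r)} ∩ Set.Icc (0:ℝ) (r/2)) := by
    intro t ht
    obtain ⟨α, hαR, hα⟩ := hcon t ht
    exact Set.mem_biUnion hαR ⟨hα, ht⟩
  have hbound : ∀ α ∈ R, volume ({t : ℝ | |⟪x, α⟫ + t * ⟪v, α⟫| < ε * (|⟪x, α⟫| + r)}
      ∩ Set.Icc (0:ℝ) (r/2)) ≤ ENNReal.ofReal (6 * ε * r / c₀) := by
    intro α hαR
    have hvα : c₀ ≤ |⟪v, α⟫| := hvlow α hαR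
    have hvαpos : 0 < |⟪v, α⟫| := lt_of_lt_of_le hc₀ hvα
    by_cases hbig : 2 * r ≤ |⟪x, α⟫|
    · have hempty : {t : ℝ | |⟪x, α⟫ + t * ⟪v, α⟫| < ε * (|⟪x, α⟫| + r)}
          ∩ Set.Icc (0:ℝ) (r/2) = ∅ := by
        rw [Set.eq_empty_iff_forall_notMem]
        rintro t ⟨hlt, ht0, ht1⟩
        simp only [Set.mem_setOf_eq] at hlt
        have ha : |⟪x, α⟫| ≤ |⟪x, α⟫ + t * ⟪v, α⟫| + t * |⟪v, α⟫| := by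
          calc |⟪x, α⟫| = |(⟪x, α⟫ + t * ⟪v, α⟫) - t * ⟪v, α⟫| := by ring_nf
          _ ≤ |⟪x, α⟫ + t * ⟪v, α⟫| + |t * ⟪v, α⟫| := abs_sub _ _
          _ = |⟪x, α⟫ + t * ⟪v, α⟫| + t * |⟪v, α⟫| := by
            rw [abs_mul, abs_of_nonneg ht0]
        have htv : t * |⟪v, α⟫| ≤ (r/2) * (3/2) :=
          mul_le_mul ht1 (le_trans (hvup α hαR) hsqrt2) (abs_nonneg _) (by linarith)
        have hεmul : ε * (|⟪x, α⟫| + r) ≤ (1/3) * (|⟪x, α⟫| + r) :=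
          mul_le_mul_of_nonneg_right hε1 (by positivity)
        linarith
      rw [hempty]
      simp
    · push_neg at hbig
      have hsubball : {t : ℝ | |⟪x, α⟫ + t * ⟪v, α⟫| < ε * (|⟪x, α⟫| + r)}
          ∩ Set.Icc (0:ℝ) (r/2)
          ⊆ Metric.ball (-⟪x, α⟫ / ⟪v, α⟫) (ε * (|⟪x, α⟫| + r) / |⟪v, α⟫|) := by
        rintro t ⟨hlt, -⟩
        rw [Metric.mem_ball, Real.dist_eq]
        have hb : ⟪v, α⟫ ≠ 0 := fun h => by
          rw [h, abs_zero] at hvαpos; exact lt_irrefl 0 hvαpos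
        have hkey : |⟪v, α⟫| * |t - -⟪x, α⟫ / ⟪v, α⟫| = |⟪x, α⟫ + t * ⟪v, α⟫| := by
          rw [← abs_mul]
          congr 1
          calc ⟪v, α⟫ * (t - -⟪x, α⟫ / ⟪v, α⟫)
              = ⟪v, α⟫ * t + ⟪x, α⟫ / ⟪v, α⟫ * ⟪v, α⟫ := by ring
          _ = ⟪x, α⟫ + t * ⟪v, α⟫ := by rw [div_mul_cancel₀ _ hb]; ring
        rw [lt_div_iff₀ hvαpos, mul_comm, hkey]
        exact hlt
      calc volume _ ≤ volume (Metric.ball (-⟪x, α⟫ / ⟪v, α⟫)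
            (ε * (|⟪x, α⟫| + r) / |⟪v, α⟫|)) := measure_mono hsubball
      _ = ENNReal.ofReal (2 * (ε * (|⟪x, α⟫| + r) / |⟪v, α⟫|)) := Real.volume_ball _ _
      _ ≤ ENNReal.ofReal (6 * ε * r / c₀) := by
        apply ENNReal.ofReal_le_ofReal
        have h2 : 2 * (ε * (|⟪x, α⟫| + r) / |⟪v, α⟫|)
            = 2 * (ε * (|⟪x, α⟫| + r)) / |⟪v, α⟫| := by ring
        have h3 : (6:ℝ) * ε * r / c₀ = 2 * (3 * ε * r) / c₀ := by ring
        rw [h2, h3]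
        exact div_le_div₀ (by positivity) (by nlinarith) hc₀ hvα
  have hIcc : volume (Set.Icc (0:ℝ) (r/2)) ≤ ENNReal.ofReal ((R.card : ℝ) * (6 * ε * r / c₀)) := by
    calc volume (Set.Icc (0:ℝ) (r/2)) ≤
        ∑ α ∈ R, volume ({t : ℝ | |⟪x, α⟫ + t * ⟪v, α⟫| < ε * (|⟪x, α⟫| + r)}
          ∩ Set.Icc (0:ℝ) (r/2)) :=
      le_trans (measure_mono hsub) (measure_biUnion_finset_le R _)
    _ ≤ ∑ α ∈ R, ENNReal.ofReal (6 * ε * r / c₀) := Finset.sum_le_sum hbound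
    _ = ENNReal.ofReal ((R.card : ℝ) * (6 * ε * r / c₀)) := by
      rw [Finset.sum_const, nsmul_eq_mul, ← ENNReal.ofReal_natCast,
        ← ENNReal.ofReal_mul (Nat.cast_nonneg _)]
  rw [Real.volume_Icc] at hIcc
  have hreal : r / 2 - 0 ≤ (R.card : ℝ) * (6 * ε * r / c₀) :=
    (ENNReal.ofReal_le_ofReal_iff (by positivity)).1 hIcc
  set m : ℝ := (R.card : ℝ) with hm
  have hm0 : 0 ≤ m := Nat.cast_nonneg _
  have h6 : 6 * ε * r / c₀ ≤ 6 * (c₀ / (24 * (m + 1))) * r / c₀ := by gcongr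
  have h7 : 6 * (c₀ / (24 * (m + 1))) * r / c₀ = r / (4 * (m + 1)) := by
    field_simp
    ring
  have h8 : m * (r / (4 * (m + 1))) ≤ r / 4 := by
    have he : m * (r / (4 * (m + 1))) = m * r / (4 * (m + 1)) := by ring
    rw [he, div_le_div_iff₀ (by positivity) (by norm_num)]
    nlinarith
  have h9 : m * (6 * ε * r / c₀) ≤ m * (r / (4 * (m + 1))) :=
    mul_le_mul_of_nonneg_left (h7 ▸ h6) hm0
  linarith

/-- There is `C ≥ 1` such that
`C⁻¹ w(B(x,r)) ≤ r^N ∏_{α∈R} (|⟨x,α⟩| + r)^{k(α)} ≤ C w(B(x,r))`. -/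
theorem wMeasure_ball_asymptotics {N : ℕ} (hN : 1 ≤ N)
    (R : Finset (EuclideanSpace ℝ (Fin N))) (hR : IsNormalizedRootSystem R)
    (k : EuclideanSpace ℝ (Fin N) → ℝ) (hk : ∀ α ∈ R, 0 < k α)
    (hkG : ∀ σ ∈ reflGroup R, ∀ α ∈ R, k (σ α) = k α) :
    ∃ C : ℝ, 1 ≤ C ∧ ∀ (x : EuclideanSpace ℝ (Fin N)) (r : ℝ), 0 < r →
      (ENNReal.ofReal C)⁻¹ * wMeasure R k (Metric.closedBall x r) ≤
        ENNReal.ofReal (r ^ N * ∏ α ∈ R, (|⟪x, α⟫| + r) ^ (k α)) ∧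
      ENNReal.ofReal (r ^ N * ∏ α ∈ R, (|⟪x, α⟫| + r) ^ (k α)) ≤
        ENNReal.ofReal C * wMeasure R k (Metric.closedBall x r) := by
  classical
  obtain ⟨hR0, -, -, -, hnorm⟩ := hR
  have hsqrt1 : (1:ℝ) ≤ Real.sqrt 2 :=
    by nlinarith [Real.sq_sqrt (show (0:ℝ) ≤ 2 by norm_num), Real.sqrt_nonneg 2]
  have hsqrt2 : Real.sqrt 2 ≤ 3 / 2 :=
    by nlinarith [Real.sq_sqrt (show (0:ℝ) ≤ 2 by norm_num), Real.sqrt_nonneg 2]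
  obtain ⟨v, hv1, hv2⟩ := auxExistsV R hR0
  obtain ⟨c₀, hc₀, hvlow⟩ := auxExistsPosLe R (fun α => |⟪v, α⟫|)
    (fun α hα => abs_pos.2 (hv2 α hα))
  have hvup : ∀ α ∈ R, |⟪v, α⟫| ≤ Real.sqrt 2 := fun α hα => by
    calc |⟪v, α⟫| ≤ ‖v‖ * ‖α‖ := abs_real_inner_le_norm v α
    _ ≤ 1 * Real.sqrt 2 := by
      rw [hnorm α hα]; exact mul_le_mul_of_nonneg_right hv1 (Real.sqrt_nonneg 2)
    _ = Real.sqrt 2 := one_mul _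
  obtain ⟨ε, hε0, hε1, hε2⟩ : ∃ ε : ℝ, 0 < ε ∧ ε ≤ 1/3 ∧ ε ≤ c₀ / (24 * ((R.card : ℝ) + 1)) :=
    ⟨min (1/3) (c₀ / (24 * ((R.card : ℝ) + 1))), lt_min (by norm_num) (by positivity),
      min_le_left _ _, min_le_right _ _⟩
  set V : ℝ≥0∞ := volume (Metric.ball (0 : EuclideanSpace ℝ (Fin N)) 1) with hVdef
  have hV0 : V ≠ 0 := (Metric.measure_ball_pos volume _ one_pos).ne'
  have hVtop : V ≠ ⊤ := measure_ball_lt_top.ne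
  set vR : ℝ := V.toReal with hvRdef
  have hvR : 0 < vR := ENNReal.toReal_pos hV0 hVtop
  have hV' : V = ENNReal.ofReal vR := (ENNReal.ofReal_toReal hVtop).symm
  set S : ℝ := ∏ α ∈ R, Real.sqrt 2 ^ (k α) with hSdef
  have hS : 0 < S :=
    Finset.prod_pos fun α hα => Real.rpow_pos_of_pos (by linarith) _
  set A : ℝ := ∏ α ∈ R, (ε/2) ^ (k α) with hAdef
  have hA : 0 < A := Finset.prod_pos fun α hα => Real.rpow_pos_of_pos (by linarith) _
  obtain ⟨δ, hδ0, hδhalf, hδε⟩ : ∃ δ : ℝ, 0 < δ ∧ δ ≤ 1/2 ∧ δ * (3/2) ≤ ε/2 :=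
    ⟨ε/4, by positivity, by linarith, by linarith⟩
  obtain ⟨C, hC1, hCu, hCl⟩ : ∃ C : ℝ, 1 ≤ C ∧ S * vR ≤ C ∧ (A * δ ^ N * vR)⁻¹ ≤ C :=
    ⟨max 1 (max (S * vR) ((A * δ ^ N * vR)⁻¹)), le_max_left _ _,
      le_trans (le_max_left _ _) (le_max_right _ _),
      le_trans (le_max_right _ _) (le_max_right _ _)⟩
  have hC0 : (0:ℝ) < C := lt_of_lt_of_le one_pos hC1
  have hfinrank : Module.finrank ℝ (EuclideanSpace ℝ (Fin N)) = N :=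
    finrank_euclideanSpace_fin
  have hmeasw : Measurable fun y : EuclideanSpace ℝ (Fin N) =>
      ENNReal.ofReal (wDensity R k y) := by
    apply Measurable.ennreal_ofReal
    unfold wDensity
    exact Finset.measurable_prod _ fun α hα =>
      ((Continuous.abs (continuous_id.inner continuous_const)).rpow_const
        (fun y => Or.inr (hk α hα).le)).measurable
  refine ⟨C, hC1, fun x r hr => ?_⟩
  set P : ℝ := ∏ α ∈ R, (|⟪x, α⟫| + r) ^ (k α) with hPdef
  have hP0 : 0 < P := Finset.prod_pos fun α hα => Real.rpow_pos_of_pos (by positivity) _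
  -- upper bound for the measure
  have hupper : wMeasure R k (Metric.closedBall x r)
      ≤ ENNReal.ofReal C * ENNReal.ofReal (r ^ N * P) := by
    have hprodeq : ∏ α ∈ R, (Real.sqrt 2 * (|⟪x, α⟫| + r)) ^ (k α) = S * P := by
      rw [hSdef, hPdef, ← Finset.prod_mul_distrib]
      exact Finset.prod_congr rfl fun α hα =>
        Real.mul_rpow (Real.sqrt_nonneg 2) (by positivity)
    have hpt : ∀ y ∈ Metric.closedBall x r,
        ENNReal.ofReal (wDensity R k y) ≤ ENNReal.ofReal (S * P) := by
      intro y hy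
      apply ENNReal.ofReal_le_ofReal
      rw [← hprodeq]
      refine Finset.prod_le_prod (fun α hα => Real.rpow_nonneg (abs_nonneg _) _)
        (fun α hα => Real.rpow_le_rpow (abs_nonneg _) ?_ (hk α hα).le)
      have h0 : (⟪y, α⟫ : ℝ) = ⟪x, α⟫ + ⟪y - x, α⟫ := by
        rw [← inner_add_left, show x + (y - x) = y by abel]
      have h1 : |⟪y, α⟫| ≤ |⟪x, α⟫| + |⟪y - x, α⟫| := h0 ▸ abs_add_le _ _
      have h2 : |⟪y - x, α⟫| ≤ ‖y - x‖ * ‖α‖ := abs_real_inner_le_norm _ _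
      rw [hnorm α hα] at h2
      have h3 : ‖y - x‖ ≤ r := by
        rw [Metric.mem_closedBall, dist_eq_norm] at hy; exact hy
      have h4 := mul_le_mul_of_nonneg_right h3 (Real.sqrt_nonneg 2)
      have h5 := mul_le_mul_of_nonneg_right hsqrt1 (abs_nonneg (⟪x, α⟫ : ℝ))
      have h6 := mul_le_mul_of_nonneg_right hsqrt1 hr.le
      linarith
    calc wMeasure R k (Metric.closedBall x r)
        = ∫⁻ y in Metric.closedBall x r, ENNReal.ofReal (wDensity R k y) :=
          withDensity_apply _ measurableSet_closedBall
    _ ≤ ∫⁻ _y in Metric.closedBall x r, ENNReal.ofReal (S * P) :=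
          setLIntegral_mono' measurableSet_closedBall hpt
    _ = ENNReal.ofReal (S * P) * volume (Metric.closedBall x r) :=
          setLIntegral_const _ _
    _ = ENNReal.ofReal (S * P) * (ENNReal.ofReal (r ^ N) * V) := by
          rw [Measure.addHaar_closedBall volume x hr.le, hfinrank]
    _ ≤ ENNReal.ofReal C * ENNReal.ofReal (r ^ N * P) := by
          rw [hV', ← ENNReal.ofReal_mul (by positivity),
            ← ENNReal.ofReal_mul (by positivity), ← ENNReal.ofReal_mul hC0.le]
          apply ENNReal.ofReal_le_ofReal
          calc S * P * (r ^ N * vR) = (S * vR) * (r ^ N * P) := by ring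
          _ ≤ C * (r ^ N * P) := mul_le_mul_of_nonneg_right hCu (by positivity)
  -- lower bound for the measure
  obtain ⟨t, ⟨ht0, ht1⟩, ht⟩ := auxExistsT R v c₀ ε hc₀ hvlow hvup hε0 hε1 hε2 x r hr
  set z : EuclideanSpace ℝ (Fin N) := x + t • v with hzdef
  have hz : ∀ α, (⟪z, α⟫ : ℝ) = ⟪x, α⟫ + t * ⟪v, α⟫ := fun α => by
    rw [hzdef, inner_add_left, real_inner_smul_left]
  have hzB : Metric.closedBall z (δ * r) ⊆ Metric.closedBall x r := by
    intro y hy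
    rw [Metric.mem_closedBall] at hy ⊢
    have hdzx : dist z x ≤ t := by
      rw [hzdef, dist_eq_norm, show x + t • v - x = t • v by abel, norm_smul,
        Real.norm_eq_abs, abs_of_nonneg ht0]
      calc t * ‖v‖ ≤ t * 1 := mul_le_mul_of_nonneg_left hv1 ht0
      _ = t := mul_one t
    calc dist y x ≤ dist y z + dist z x := dist_triangle _ _ _
    _ ≤ δ * r + t := add_le_add hy hdzx
    _ ≤ r := by
      have := mul_le_mul_of_nonneg_right hδhalf hr.le
      linarith
  have hprodeq2 : ∏ α ∈ R, (ε/2 * (|⟪x, α⟫| + r)) ^ (k α) = A * P := by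
    rw [hAdef, hPdef, ← Finset.prod_mul_distrib]
    exact Finset.prod_congr rfl fun α hα => Real.mul_rpow (by linarith) (by positivity)
  have hptlow : ∀ y ∈ Metric.closedBall z (δ * r),
      ENNReal.ofReal (A * P) ≤ ENNReal.ofReal (wDensity R k y) := by
    intro y hy
    apply ENNReal.ofReal_le_ofReal
    rw [← hprodeq2]
    refine Finset.prod_le_prod (fun α hα => by positivity)
      (fun α hα => Real.rpow_le_rpow (by positivity) ?_ (hk α hα).le)
    have h0 : (⟪z, α⟫ : ℝ) = ⟪y, α⟫ + ⟪z - y, α⟫ := by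
      rw [← inner_add_left, show y + (z - y) = z by abel]
    have h1 : |⟪z, α⟫| ≤ |⟪y, α⟫| + |⟪z - y, α⟫| := h0 ▸ abs_add_le _ _
    have h2 : |⟪z - y, α⟫| ≤ ‖z - y‖ * ‖α‖ := abs_real_inner_le_norm _ _
    rw [hnorm α hα] at h2
    have h3 : ‖z - y‖ ≤ δ * r := by
      rw [Metric.mem_closedBall, dist_eq_norm] at hy
      rw [← norm_neg, show -(z - y) = y - z by abel]
      exact hy
    have h4 : ‖z - y‖ * Real.sqrt 2 ≤ (δ * r) * (3/2) :=
      mul_le_mul h3 hsqrt2 (Real.sqrt_nonneg 2) (by positivity)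
    have h5 : ε * (|⟪x, α⟫| + r) ≤ |⟪z, α⟫| := by rw [hz α]; exact ht α hα
    have h6 : ε * r ≤ ε * (|⟪x, α⟫| + r) :=
      mul_le_mul_of_nonneg_left (le_add_of_nonneg_left (abs_nonneg _)) hε0.le
    have h7 : (δ * r) * (3/2) ≤ (ε/2) * r := by
      have := mul_le_mul_of_nonneg_right hδε hr.le
      linarith
    linarith
  have hlower : ENNReal.ofReal (A * P) * (ENNReal.ofReal ((δ * r) ^ N) * V)
      ≤ wMeasure R k (Metric.closedBall x r) := by
    calc ENNReal.ofReal (A * P) * (ENNReal.ofReal ((δ * r) ^ N) * V)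
        = ENNReal.ofReal (A * P) * volume (Metric.closedBall z (δ * r)) := by
          rw [Measure.addHaar_closedBall volume z (by positivity), hfinrank]
    _ = ∫⁻ _y in Metric.closedBall z (δ * r), ENNReal.ofReal (A * P) :=
          (setLIntegral_const _ _).symm
    _ ≤ ∫⁻ y in Metric.closedBall z (δ * r), ENNReal.ofReal (wDensity R k y) :=
          setLIntegral_mono' measurableSet_closedBall hptlow
    _ = wMeasure R k (Metric.closedBall z (δ * r)) :=
          (withDensity_apply _ measurableSet_closedBall).symm
    _ ≤ wMeasure R k (Metric.closedBall x r) := measure_mono hzB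
  constructor
  · calc (ENNReal.ofReal C)⁻¹ * wMeasure R k (Metric.closedBall x r)
        ≤ (ENNReal.ofReal C)⁻¹ * (ENNReal.ofReal C * ENNReal.ofReal (r ^ N * P)) :=
          mul_le_mul_right hupper _
    _ = ((ENNReal.ofReal C)⁻¹ * ENNReal.ofReal C) * ENNReal.ofReal (r ^ N * P) :=
          (mul_assoc _ _ _).symm
    _ = ENNReal.ofReal (r ^ N * P) := by
          rw [ENNReal.inv_mul_cancel (ENNReal.ofReal_pos.2 hC0).ne' ENNReal.ofReal_ne_top,
            one_mul]
  · have h1 : (1:ℝ) ≤ C * (A * δ ^ N * vR) := by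
      have hpos : (0:ℝ) < A * δ ^ N * vR := by positivity
      calc (1:ℝ) = (A * δ ^ N * vR)⁻¹ * (A * δ ^ N * vR) := (inv_mul_cancel₀ hpos.ne').symm
      _ ≤ C * (A * δ ^ N * vR) := mul_le_mul_of_nonneg_right hCl hpos.le
    calc ENNReal.ofReal (r ^ N * P)
        ≤ ENNReal.ofReal (C * (A * P * ((δ * r) ^ N * vR))) := by
          apply ENNReal.ofReal_le_ofReal
          calc r ^ N * P = 1 * (r ^ N * P) := (one_mul _).symm
          _ ≤ (C * (A * δ ^ N * vR)) * (r ^ N * P) :=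
            mul_le_mul_of_nonneg_right h1 (by positivity)
          _ = C * (A * P * ((δ * r) ^ N * vR)) := by rw [mul_pow]; ring
    _ = ENNReal.ofReal C * (ENNReal.ofReal (A * P)
          * (ENNReal.ofReal ((δ * r) ^ N) * ENNReal.ofReal vR)) := by
          rw [← ENNReal.ofReal_mul (by positivity), ← ENNReal.ofReal_mul (by positivity),
            ← ENNReal.ofReal_mul hC0.le]
    _ = ENNReal.ofReal C * (ENNReal.ofReal (A * P)
          * (ENNReal.ofReal ((δ * r) ^ N) * V)) := by rw [← hV']
    _ ≤ ENNReal.ofReal C * wMeasure R k (Metric.closedBall x r) :=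
          mul_le_mul_right hlower _

end
end

section
/- The measure dw is doubling: there is a constant C > 0 such that w(B(x,2r)) ≤ C · w(B(x,r)) for all x ∈ ℝ^N and r > 0. -/
/-!
On `B(x, 2r)` each factor satisfies `|⟪y, α⟫| ≤ (1 + 2‖α‖) (|⟪x, α⟫| + r)`. Conversely, step from
`x` by `r / 2` along a unit vector `v` that lies on the same side of every hyperplane `α^⊥` as `x`
and has `|⟪v, α⟫| ≥ c₀ > 0` for all of them; since there are finitely many sign patterns,
`c₀` can be chosen independently of `x`. A ball of radius `c r` around the new point lies in
`B(x, r)`, and on it `|⟪y, α⟫| ≥ c (|⟪x, α⟫| + r)`. So the density is comparable to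
`∏ (|⟪x, α⟫| + r) ^ k α` on both balls, and the ratio of their Lebesgue measures is `(2 / c) ^ N`.
-/

open scoped RealInnerProductSpace ENNReal
open MeasureTheory Filter Topology

noncomputable section

open Metric Module

lemma Finset.prod_rpow_le_prod_rpow {ι : Type*} {s : Finset ι} {a b k : ι → ℝ}
    (ha : ∀ i ∈ s, 0 ≤ a i) (hab : ∀ i ∈ s, a i ≤ b i) (hk : ∀ i ∈ s, 0 ≤ k i) :
    ∏ i ∈ s, a i ^ k i ≤ ∏ i ∈ s, b i ^ k i :=
  Finset.prod_le_prod (fun i hi => Real.rpow_nonneg (ha i hi) _)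
    fun i hi => Real.rpow_le_rpow (ha i hi) (hab i hi) (hk i hi)

lemma Finset.prod_mul_rpow {ι : Type*} {s : Finset ι} {a b k : ι → ℝ}
    (ha : ∀ i ∈ s, 0 ≤ a i) (hb : ∀ i ∈ s, 0 ≤ b i) :
    ∏ i ∈ s, (a i * b i) ^ k i = (∏ i ∈ s, a i ^ k i) * ∏ i ∈ s, b i ^ k i := by
  rw [← Finset.prod_mul_distrib]
  exact Finset.prod_congr rfl fun i hi => Real.mul_rpow (ha i hi) (hb i hi)

lemma exists_pos_forall_le_of_finite {ι : Type*} [Finite ι] (g : ι → ℝ) (hg : ∀ i, 0 < g i) :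
    ∃ c, 0 < c ∧ ∀ i, c ≤ g i := by
  cases isEmpty_or_nonempty ι
  · exact ⟨1, one_pos, isEmptyElim⟩
  · obtain ⟨i₀, hi₀⟩ := Finite.exists_min g
    exact ⟨g i₀, hg i₀, hi₀⟩

lemma mul_nonneg_of_sign_eq {a a' b : ℝ} (hsign : SignType.sign a = SignType.sign a')
    (h : 0 ≤ a * b) : 0 ≤ a' * b := by
  rw [← sign_nonneg_iff, sign_mul, ← hsign, ← sign_mul, sign_nonneg_iff]
  exact h

lemma withDensity_closedBall_two_mul_le {E : Type*} [NormedAddCommGroup E] [NormedSpace ℝ E]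
    [FiniteDimensional ℝ E] [MeasurableSpace E] [BorelSpace E] (μ : Measure E)
    [μ.IsAddHaarMeasure] {f : E → ℝ≥0∞} {C a : ℝ≥0∞} {x x' : E} {c r : ℝ} (hc : 0 < c)
    (hr : 0 < r) (hsub : closedBall x' (c * r) ⊆ closedBall x r)
    (hup : ∀ y ∈ closedBall x (2 * r), f y ≤ C * a)
    (hlow : ∀ y ∈ closedBall x' (c * r), a ≤ f y) :
    μ.withDensity f (closedBall x (2 * r)) ≤
      C * ENNReal.ofReal ((2 / c) ^ finrank ℝ E) * μ.withDensity f (closedBall x r) := by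
  have hvol : μ (closedBall x (2 * r)) =
      ENNReal.ofReal ((2 / c) ^ finrank ℝ E) * μ (closedBall x' (c * r)) := by
    rw [show 2 * r = 2 / c * (c * r) by field_simp,
      Measure.addHaar_closedBall_mul_of_pos μ x (by positivity),
      Measure.addHaar_closedBall_center μ x']
  calc μ.withDensity f (closedBall x (2 * r))
      = ∫⁻ y in closedBall x (2 * r), f y ∂μ := withDensity_apply f measurableSet_closedBall
    _ ≤ ∫⁻ _ in closedBall x (2 * r), C * a ∂μ := setLIntegral_mono' measurableSet_closedBall hup
    _ = C * ENNReal.ofReal ((2 / c) ^ finrank ℝ E) * ∫⁻ _ in closedBall x' (c * r), a ∂μ := by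
      rw [setLIntegral_const, setLIntegral_const, hvol]
      ring
    _ ≤ C * ENNReal.ofReal ((2 / c) ^ finrank ℝ E) * ∫⁻ y in closedBall x' (c * r), f y ∂μ :=
      mul_le_mul_right (setLIntegral_mono' measurableSet_closedBall hlow) _
    _ ≤ C * ENNReal.ofReal ((2 / c) ^ finrank ℝ E) * μ.withDensity f (closedBall x r) := by
      gcongr
      exact (withDensity_apply_le f _).trans (measure_mono hsub)

section InnerProductSpace

variable {E : Type*} [NormedAddCommGroup E] [InnerProductSpace ℝ E]

lemma abs_inner_le_abs_inner_add_dist_mul_norm (x y α : E) :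
    |⟪y, α⟫| ≤ |⟪x, α⟫| + dist y x * ‖α‖ := by
  calc |⟪y, α⟫| = |⟪x, α⟫ + ⟪y - x, α⟫| := by rw [inner_sub_left, add_sub_cancel]
    _ ≤ |⟪x, α⟫| + ‖y - x‖ * ‖α‖ :=
      (abs_add_le _ _).trans (add_le_add_right (abs_real_inner_le_norm _ _) _)
    _ = |⟪x, α⟫| + dist y x * ‖α‖ := by rw [dist_eq_norm]

variable {R : Finset E}

lemma exists_forall_inner_ne_zero (hR : ∀ α ∈ R, α ≠ 0) : ∃ u : E, ∀ α ∈ R, ⟪u, α⟫ ≠ 0 := by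
  obtain ⟨u, hu⟩ := Module.Dual.exists_forall_ne_zero_of_forall_exists
    (fun α : R => innerₗ E (α : E)) fun α => ⟨α, inner_self_ne_zero.2 (hR α α.2)⟩
  exact ⟨u, fun α hα => by simpa [real_inner_comm] using hu ⟨α, hα⟩⟩

/-- A small generic perturbation of `x` moves it off every hyperplane `α^⊥` without crossing any. -/
lemma exists_forall_inner_ne_zero_and_mul_nonneg (hR : ∀ α ∈ R, α ≠ 0) (x : E) :
    ∃ v : E, ∀ α ∈ R, ⟪v, α⟫ ≠ 0 ∧ 0 ≤ ⟪x, α⟫ * ⟪v, α⟫ := by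
  obtain ⟨u, hu⟩ := exists_forall_inner_ne_zero hR
  have hinner (ε : ℝ) (α : E) : ⟪x + ε • u, α⟫ = ⟪x, α⟫ + ε * ⟪u, α⟫ := by
    rw [inner_add_left, real_inner_smul_left]
  have hev : ∀ α ∈ R, ∀ᶠ ε in 𝓝[>] (0 : ℝ),
      ⟪x + ε • u, α⟫ ≠ 0 ∧ 0 ≤ ⟪x, α⟫ * ⟪x + ε • u, α⟫ := by
    intro α hα
    by_cases hxα : ⟪x, α⟫ = 0
    · filter_upwards [self_mem_nhdsWithin] with ε (hε : 0 < ε)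
      simp [hinner, hxα, hε.ne', hu α hα]
    · have hlim : Tendsto (fun ε : ℝ => ⟪x, α⟫ * (⟪x, α⟫ + ε * ⟪u, α⟫)) (𝓝[>] 0)
          (𝓝 (⟪x, α⟫ * ⟪x, α⟫)) := by
        have hcont : Continuous fun ε : ℝ => ⟪x, α⟫ * (⟪x, α⟫ + ε * ⟪u, α⟫) := by fun_prop
        simpa using (hcont.tendsto 0).mono_left nhdsWithin_le_nhds
      filter_upwards [hlim.eventually_const_lt (mul_self_pos.2 hxα)] with ε hε
      rw [hinner]
      exact ⟨right_ne_zero_of_mul hε.ne', hε.le⟩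
  obtain ⟨ε, hε⟩ := ((eventually_all_finset R).2 hev).exists
  exact ⟨x + ε • u, hε⟩

lemma exists_uniform_direction (hR : ∀ α ∈ R, α ≠ 0) :
    ∃ c, 0 < c ∧ ∀ x : E, ∃ v : E, ‖v‖ ≤ 1 ∧
      ∀ α ∈ R, c ≤ |⟪v, α⟫| ∧ 0 ≤ ⟪x, α⟫ * ⟪v, α⟫ := by
  classical
  choose V hV using exists_forall_inner_ne_zero_and_mul_nonneg hR
  let W (x : E) : E := ‖V x‖⁻¹ • V x
  have hW_norm (x : E) : ‖W x‖ ≤ 1 := by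
    rw [norm_smul, norm_inv, norm_norm]
    exact inv_mul_le_one
  have hW (x : E) : ∀ α ∈ R, ⟪W x, α⟫ ≠ 0 ∧ 0 ≤ ⟪x, α⟫ * ⟪W x, α⟫ := by
    intro α hα
    obtain ⟨hne, hnonneg⟩ := hV x α hα
    have hpos : 0 < ‖V x‖⁻¹ := inv_pos.2 (norm_pos_iff.2 fun h => hne (by simp [h]))
    rw [real_inner_smul_left, mul_left_comm]
    exact ⟨mul_ne_zero hpos.ne' hne, mul_nonneg hpos.le hnonneg⟩
  let pattern (x : E) : R → SignType := fun α => SignType.sign ⟪x, (α : E)⟫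
  let rep (p : R → SignType) : E := if h : ∃ x, pattern x = p then h.choose else 0
  have hrep (x : E) : pattern (rep (pattern x)) = pattern x := by
    have h : ∃ y, pattern y = pattern x := ⟨x, rfl⟩
    simp only [rep, dif_pos h]
    exact h.choose_spec
  obtain ⟨c, hc, hcle⟩ := exists_pos_forall_le_of_finite
    (fun q : (R → SignType) × R => |⟪W (rep q.1), (q.2 : E)⟫|)
    fun q => abs_pos.2 (hW _ q.2 q.2.2).1
  refine ⟨c, hc, fun x => ⟨W (rep (pattern x)), hW_norm _, fun α hα => ?_⟩⟩
  exact ⟨hcle (pattern x, ⟨α, hα⟩),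
    mul_nonneg_of_sign_eq (congrFun (hrep x) ⟨α, hα⟩) (hW _ α hα).2⟩

lemma exists_closedBall_subset_forall_mul_le_abs_inner (hR : ∀ α ∈ R, α ≠ 0) :
    ∃ c, 0 < c ∧ ∀ (x : E) (r : ℝ), 0 < r → ∃ x', closedBall x' (c * r) ⊆ closedBall x r ∧
      ∀ y ∈ closedBall x' (c * r), ∀ α ∈ R, c * (|⟪x, α⟫| + r) ≤ |⟪y, α⟫| := by
  obtain ⟨c₀, hc₀, hdir⟩ := exists_uniform_direction hR
  set m := min c₀ 1
  set M := 1 + ∑ α ∈ R, ‖α‖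
  have hm : 0 < m := lt_min hc₀ one_pos
  have hM : 1 ≤ M := le_add_of_nonneg_right (Finset.sum_nonneg fun α _ => norm_nonneg α)
  have hαM : ∀ α ∈ R, ‖α‖ ≤ M := fun α hα =>
    (Finset.single_le_sum (fun β _ => norm_nonneg β) hα).trans (le_add_of_nonneg_left zero_le_one)
  have hc : 0 < m / (4 * M) := by positivity
  have hcm : m / (4 * M) ≤ m / 4 := div_le_div_of_nonneg_left hm.le (by positivity) (by linarith)
  have hm1 : m ≤ 1 := min_le_right _ _
  refine ⟨m / (4 * M), hc, fun x r hr => ?_⟩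
  obtain ⟨v, hv, hvα⟩ := hdir x
  have hx' : dist (x + (r / 2) • v) x ≤ r / 2 := by
    rw [dist_eq_norm, add_sub_cancel_left, norm_smul, Real.norm_of_nonneg (by positivity)]
    exact mul_le_of_le_one_right (by positivity) hv
  refine ⟨x + (r / 2) • v, fun y hy => ?_, fun y hy α hα => ?_⟩
  · rw [mem_closedBall] at hy ⊢
    nlinarith [dist_triangle y (x + (r / 2) • v) x]
  · obtain ⟨hc₀α, hsign⟩ := hvα α hα
    have hshift : |⟪x, α⟫| + r / 2 * c₀ ≤ |⟪x + (r / 2) • v, α⟫| := by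
      rw [inner_add_left, real_inner_smul_left,
        abs_add_eq_add_abs_iff _ _ |>.2 (mul_nonneg_iff.1 (by
          rw [mul_left_comm]; exact mul_nonneg (half_pos hr).le hsign)), abs_mul,
        abs_of_pos (half_pos hr)]
      gcongr
    have hdist := abs_inner_le_abs_inner_add_dist_mul_norm y (x + (r / 2) • v) α
    rw [dist_comm] at hdist
    have hcα : dist y (x + (r / 2) • v) * ‖α‖ ≤ m / 4 * r := by
      calc dist y (x + (r / 2) • v) * ‖α‖ ≤ m / (4 * M) * r * M :=
            mul_le_mul (mem_closedBall.1 hy) (hαM α hα) (norm_nonneg α) (by positivity)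
        _ = m / 4 * r := by field_simp
    have hmc₀ : m ≤ c₀ := min_le_left _ _
    nlinarith [abs_nonneg ⟪x, α⟫]

theorem withDensity_prod_abs_inner_rpow_doubling [FiniteDimensional ℝ E] [MeasurableSpace E]
    [BorelSpace E] (μ : Measure E) [μ.IsAddHaarMeasure] (hR : ∀ α ∈ R, α ≠ 0) {k : E → ℝ}
    (hk : ∀ α ∈ R, 0 ≤ k α) :
    ∃ C : ℝ, 0 < C ∧ ∀ (x : E) (r : ℝ), 0 < r →
      μ.withDensity (fun y => ENNReal.ofReal (∏ α ∈ R, |⟪y, α⟫| ^ k α)) (closedBall x (2 * r)) ≤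
        ENNReal.ofReal C *
          μ.withDensity (fun y => ENNReal.ofReal (∏ α ∈ R, |⟪y, α⟫| ^ k α)) (closedBall x r) := by
  obtain ⟨c, hc, hball⟩ := exists_closedBall_subset_forall_mul_le_abs_inner hR
  set C₁ := ∏ α ∈ R, (1 + 2 * ‖α‖) ^ k α
  set C₂ := ∏ α ∈ R, c ^ k α
  have hC₂ : 0 < C₂ := Finset.prod_pos fun α _ => by positivity
  refine ⟨C₁ / C₂ * (2 / c) ^ finrank ℝ E, by positivity, fun x r hr => ?_⟩
  obtain ⟨x', hsub, hlow⟩ := hball x r hr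
  set P := ∏ α ∈ R, (|⟪x, α⟫| + r) ^ k α
  have hC : C₁ / C₂ * (C₂ * P) = C₁ * P := by field_simp
  have hA : ∀ α ∈ R, 0 ≤ |⟪x, α⟫| + r := fun α _ => by positivity
  rw [ENNReal.ofReal_mul (by positivity)]
  refine withDensity_closedBall_two_mul_le μ hc hr hsub (a := ENNReal.ofReal (C₂ * P))
    (fun y hy => ?_) fun y hy => ?_
  · rw [← ENNReal.ofReal_mul (by positivity), hC, ← Finset.prod_mul_rpow
      (fun α _ => by positivity) hA]
    refine ENNReal.ofReal_le_ofReal (Finset.prod_rpow_le_prod_rpow (fun α _ => abs_nonneg _)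
      (fun α _ => ?_) hk)
    have := abs_inner_le_abs_inner_add_dist_mul_norm x y α
    nlinarith [mem_closedBall.1 hy, norm_nonneg α, abs_nonneg ⟪x, α⟫]
  · rw [← Finset.prod_mul_rpow (fun α _ => hc.le) hA]
    exact ENNReal.ofReal_le_ofReal (Finset.prod_rpow_le_prod_rpow
      (fun α hα => mul_nonneg hc.le (hA α hα)) (hlow y hy) hk)

end InnerProductSpace

theorem wMeasure_doubling_general {N : ℕ}
    (R : Finset (EuclideanSpace ℝ (Fin N))) (hR : IsNormalizedRootSystem R)
    (k : EuclideanSpace ℝ (Fin N) → ℝ) (hk : ∀ α ∈ R, 0 < k α) :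
    ∃ C : ℝ, 0 < C ∧ ∀ (x : EuclideanSpace ℝ (Fin N)) (r : ℝ), 0 < r →
      wMeasure R k (Metric.closedBall x (2 * r)) ≤
        ENNReal.ofReal C * wMeasure R k (Metric.closedBall x r) :=
  withDensity_prod_abs_inner_rpow_doubling volume (fun _ hα h => hR.1 (h ▸ hα))
    fun α hα => (hk α hα).le

/-- The measure `dw` is doubling. -/
theorem wMeasure_doubling {N : ℕ} (hN : 1 ≤ N)
    (R : Finset (EuclideanSpace ℝ (Fin N))) (hR : IsNormalizedRootSystem R)
    (k : EuclideanSpace ℝ (Fin N) → ℝ) (hk : ∀ α ∈ R, 0 < k α)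
    (hkG : ∀ σ ∈ reflGroup R, ∀ α ∈ R, k (σ α) = k α) :
    ∃ C : ℝ, 0 < C ∧ ∀ (x : EuclideanSpace ℝ (Fin N)) (r : ℝ), 0 < r →
      wMeasure R k (Metric.closedBall x (2 * r)) ≤
        ENNReal.ofReal C * wMeasure R k (Metric.closedBall x r) :=
  wMeasure_doubling_general R hR k hk

end
end

section
/- For a measurable function V : ℝ^N → [0,∞) define 𝐆(V)(x) = ∫₀^∞ ∫_{ℝ^N} w(B(x,√s))^{−1} e^{−‖x−y‖²/s} V(y) dw(y) ds and 𝒢(V)(x) = ∫₀^∞ ∫_{ℝ^N} w(B(x,√s))^{−1} e^{−d(x,y)²/s} V(y) dw(y) ds. Then 𝐆(V)(x) ≤ 𝒢(V)(x) for every x ∈ ℝ^N, and there is a constant C > 0, depending only on R and k, such that sup_{x∈ℝ^N} 𝒢(V)(x) ≤ C · sup_{x∈ℝ^N} 𝐆(V)(x) for every measurable V : ℝ^N → [0,∞). -/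
open scoped RealInnerProductSpace ENNReal
open MeasureTheory Filter Topology

noncomputable section

/-- `𝐆(V)(x) = ∫₀^∞ ∫ w(B(x,√s))⁻¹ e^{−‖x−y‖²/s} V(y) dw(y) ds`. -/
def greenEuclid {N : ℕ} (R : Finset (EuclideanSpace ℝ (Fin N)))
    (k : EuclideanSpace ℝ (Fin N) → ℝ) (V : EuclideanSpace ℝ (Fin N) → ℝ)
    (x : EuclideanSpace ℝ (Fin N)) : ℝ≥0∞ :=
  ∫⁻ s in Set.Ioi (0 : ℝ),
    ∫⁻ y, (wMeasure R k (Metric.closedBall x (Real.sqrt s)))⁻¹ *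
      ENNReal.ofReal (Real.exp (-‖x - y‖ ^ 2 / s) * V y) ∂(wMeasure R k)

/-- `𝒢(V)(x) = ∫₀^∞ ∫ w(B(x,√s))⁻¹ e^{−d(x,y)²/s} V(y) dw(y) ds`. -/
def greenOrbit {N : ℕ} (R : Finset (EuclideanSpace ℝ (Fin N)))
    (k : EuclideanSpace ℝ (Fin N) → ℝ) (V : EuclideanSpace ℝ (Fin N) → ℝ)
    (x : EuclideanSpace ℝ (Fin N)) : ℝ≥0∞ :=
  ∫⁻ s in Set.Ioi (0 : ℝ),
    ∫⁻ y, (wMeasure R k (Metric.closedBall x (Real.sqrt s)))⁻¹ *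
      ENNReal.ofReal (Real.exp (-(orbitDist R x y) ^ 2 / s) * V y) ∂(wMeasure R k)

/-! Since `d(x, y) ≤ ‖x − y‖`, the first inequality holds already for the integrands. For the
second, `G` is finite and `w`, hence `r ↦ w(B(x, r))`, is `G`-invariant. Choosing `σ ∈ G` with `d(x, y) = ‖σ⁻¹ x − y‖` bounds the
orbit integrand at `x` by the sum over `σ ∈ G` of the Euclidean integrands at `σ x`, so
`𝒢(V)(x) ≤ ∑_{σ ∈ G} 𝐆(V)(σ x) ≤ |G| · sup 𝐆(V)`. -/

variable {N : ℕ} {R : Finset (EuclideanSpace ℝ (Fin N))} {k V : EuclideanSpace ℝ (Fin N) → ℝ}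

instance : SFinite (wMeasure R k) := by
  unfold wMeasure
  infer_instance

lemma dunklReflection_of_inner_eq_zero {α v : EuclideanSpace ℝ (Fin N)} (h : ⟪v, α⟫ = 0) :
    dunklReflection α v = v := by
  simp [dunklReflection, h]

lemma reflGroup_image_roots
    (hR : ∀ α ∈ R, dunklReflection α '' (R : Set (EuclideanSpace ℝ (Fin N))) = R)
    {σ : EuclideanSpace ℝ (Fin N) ≃ₗᵢ[ℝ] EuclideanSpace ℝ (Fin N)} (hσ : σ ∈ reflGroup R) :
    σ '' (R : Set (EuclideanSpace ℝ (Fin N))) = R := by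
  induction hσ using Subgroup.closure_induction with
  | mem g hg =>
    obtain ⟨α, hα, hg⟩ := hg
    rw [show ⇑g = dunklReflection α from funext hg]
    exact hR α hα
  | one => simp
  | mul g h _ _ hg hh => rw [LinearIsometryEquiv.coe_mul, Set.image_comp, hh, hg]
  | inv g _ hg =>
    conv_lhs => rw [← hg]
    simp [Set.image_image]

lemma reflGroup_apply_mem
    (hR : ∀ α ∈ R, dunklReflection α '' (R : Set (EuclideanSpace ℝ (Fin N))) = R)
    {σ : EuclideanSpace ℝ (Fin N) ≃ₗᵢ[ℝ] EuclideanSpace ℝ (Fin N)} (hσ : σ ∈ reflGroup R)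
    {α : EuclideanSpace ℝ (Fin N)} (hα : α ∈ R) : σ α ∈ R := by
  rw [← Finset.mem_coe, ← reflGroup_image_roots hR hσ]
  exact Set.mem_image_of_mem _ hα

lemma reflGroup_apply_of_mem_orthogonal
    {σ : EuclideanSpace ℝ (Fin N) ≃ₗᵢ[ℝ] EuclideanSpace ℝ (Fin N)} (hσ : σ ∈ reflGroup R)
    {v : EuclideanSpace ℝ (Fin N)}
    (hv : v ∈ (Submodule.span ℝ (R : Set (EuclideanSpace ℝ (Fin N))))ᗮ) : σ v = v := by
  induction hσ using Subgroup.closure_induction with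
  | mem g hg =>
    obtain ⟨α, hα, hg⟩ := hg
    rw [hg]
    exact dunklReflection_of_inner_eq_zero
      (Submodule.inner_left_of_mem_orthogonal (Submodule.subset_span hα) hv)
  | one => rfl
  | mul g h _ _ hg hh => rw [LinearIsometryEquiv.coe_mul, Function.comp_apply, hh, hg]
  | inv g _ hg => rw [LinearIsometryEquiv.coe_inv, LinearIsometryEquiv.symm_apply_eq, hg]

/-- An element of the group is determined by the permutation it induces on `R`, since it fixes
`(span R)ᗮ` pointwise. -/
lemma reflGroup_finite
    (hR : ∀ α ∈ R, dunklReflection α '' (R : Set (EuclideanSpace ℝ (Fin N))) = R) :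
    Finite (reflGroup R) := by
  refine Finite.of_injective
    (fun σ : reflGroup R => fun α : R => (⟨σ.1 α, reflGroup_apply_mem hR σ.2 α.2⟩ : R)) ?_
  intro σ τ hστ
  have hspan : Submodule.span ℝ ((R : Set (EuclideanSpace ℝ (Fin N))) ∪
      (Submodule.span ℝ (R : Set (EuclideanSpace ℝ (Fin N))))ᗮ) = ⊤ := by
    rw [Submodule.span_union, Submodule.span_eq,
      Submodule.sup_orthogonal_of_hasOrthogonalProjection]
  have hlin := LinearMap.ext_on hspan
    (f := σ.1.toLinearEquiv.toLinearMap) (g := τ.1.toLinearEquiv.toLinearMap) <| by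
    rintro v (hv | hv)
    · exact congrArg Subtype.val (congrFun hστ ⟨v, hv⟩)
    · simp [reflGroup_apply_of_mem_orthogonal σ.2 hv, reflGroup_apply_of_mem_orthogonal τ.2 hv]
  exact Subtype.ext (LinearIsometryEquiv.ext (LinearMap.congr_fun hlin))

lemma orbitDist_nonneg (x y : EuclideanSpace ℝ (Fin N)) : 0 ≤ orbitDist R x y := by
  refine le_csInf ⟨‖x - y‖, 1, one_mem _, by simp⟩ ?_
  rintro r ⟨σ, -, rfl⟩
  positivity

lemma orbitDist_le_norm_sub (x y : EuclideanSpace ℝ (Fin N)) : orbitDist R x y ≤ ‖x - y‖ := by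
  refine csInf_le ⟨0, ?_⟩ ⟨1, one_mem _, by simp⟩
  rintro r ⟨σ, -, rfl⟩
  positivity

lemma exists_orbitDist_eq [Finite (reflGroup R)] (x y : EuclideanSpace ℝ (Fin N)) :
    ∃ σ ∈ reflGroup R, orbitDist R x y = ‖x - σ y‖ := by
  have hfin : {r | ∃ σ ∈ reflGroup R, r = ‖x - σ y‖}.Finite := by
    refine (Set.finite_range fun σ : reflGroup R => ‖x - σ.1 y‖).subset ?_
    rintro r ⟨σ, hσ, rfl⟩
    exact ⟨⟨σ, hσ⟩, rfl⟩
  have hne : {r | ∃ σ ∈ reflGroup R, r = ‖x - σ y‖}.Nonempty := ⟨_, 1, one_mem _, rfl⟩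
  exact hne.csInf_mem hfin

lemma withDensity_preimage_linearIsometryEquiv {E : Type*} [NormedAddCommGroup E]
    [InnerProductSpace ℝ E] [FiniteDimensional ℝ E] [MeasurableSpace E] [BorelSpace E]
    (e : E ≃ₗᵢ[ℝ] E) {f : E → ℝ≥0∞} (hf : ∀ x, f (e x) = f x) {s : Set E}
    (hs : MeasurableSet s) :
    volume.withDensity f (e ⁻¹' s) = volume.withDensity f s := by
  rw [withDensity_apply _ (e.continuous.measurable hs), withDensity_apply _ hs,
    ← e.measurePreserving.setLIntegral_comp_preimage_emb e.toHomeomorph.measurableEmbedding f s]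
  simp only [hf]

lemma wDensity_reflGroup_apply
    (hR : ∀ α ∈ R, dunklReflection α '' (R : Set (EuclideanSpace ℝ (Fin N))) = R)
    (hkG : ∀ σ ∈ reflGroup R, ∀ α ∈ R, k (σ α) = k α)
    {σ : EuclideanSpace ℝ (Fin N) ≃ₗᵢ[ℝ] EuclideanSpace ℝ (Fin N)} (hσ : σ ∈ reflGroup R)
    (x : EuclideanSpace ℝ (Fin N)) : wDensity R k (σ x) = wDensity R k x := by
  refine (Finset.prod_nbij' σ σ.symm (fun _ hα => reflGroup_apply_mem hR hσ hα)
    (fun _ hα => reflGroup_apply_mem hR (inv_mem hσ) hα) (by simp) (by simp)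
    fun α hα => ?_).symm
  rw [LinearIsometryEquiv.inner_map_map, hkG σ hσ α hα]

lemma wMeasure_closedBall_reflGroup_apply
    (hR : ∀ α ∈ R, dunklReflection α '' (R : Set (EuclideanSpace ℝ (Fin N))) = R)
    (hkG : ∀ σ ∈ reflGroup R, ∀ α ∈ R, k (σ α) = k α)
    {σ : EuclideanSpace ℝ (Fin N) ≃ₗᵢ[ℝ] EuclideanSpace ℝ (Fin N)} (hσ : σ ∈ reflGroup R)
    (x : EuclideanSpace ℝ (Fin N)) (r : ℝ) :
    wMeasure R k (Metric.closedBall (σ x) r) = wMeasure R k (Metric.closedBall x r) := by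
  rw [← σ.isometry.preimage_closedBall x r]
  exact (withDensity_preimage_linearIsometryEquiv σ
    (fun y => by rw [wDensity_reflGroup_apply hR hkG hσ]) measurableSet_closedBall).symm

variable (R k V) in
def greenEuclidIntegrand (x : EuclideanSpace ℝ (Fin N)) (s : ℝ) (y : EuclideanSpace ℝ (Fin N)) :
    ℝ≥0∞ :=
  (wMeasure R k (Metric.closedBall x (Real.sqrt s)))⁻¹ *
    ENNReal.ofReal (Real.exp (-‖x - y‖ ^ 2 / s) * V y)

lemma measurable_greenEuclidIntegrand (hV : Measurable V) (x : EuclideanSpace ℝ (Fin N)) :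
    Measurable (Function.uncurry (greenEuclidIntegrand R k V x)) := by
  have hball : Monotone fun s : ℝ => wMeasure R k (Metric.closedBall x (Real.sqrt s)) :=
    fun a b hab => measure_mono (Metric.closedBall_subset_closedBall (Real.sqrt_le_sqrt hab))
  refine (hball.measurable.inv.comp measurable_fst).mul (ENNReal.measurable_ofReal.comp ?_)
  refine (Real.measurable_exp.comp (Measurable.div ?_ measurable_fst)).mul (hV.comp measurable_snd)
  exact ((continuous_const.sub continuous_snd).norm.pow 2).neg.measurable

variable (R k V) in
lemma greenEuclid_le_greenOrbit (x : EuclideanSpace ℝ (Fin N)) :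
    greenEuclid R k V x ≤ greenOrbit R k V x := by
  refine setLIntegral_mono' measurableSet_Ioi fun s (hs : 0 < s) => lintegral_mono fun y => ?_
  rw [ENNReal.ofReal_mul (Real.exp_pos _).le, ENNReal.ofReal_mul (Real.exp_pos _).le]
  gcongr
  exacts [orbitDist_nonneg x y, orbitDist_le_norm_sub x y]

lemma greenOrbit_integrand_le_sum [Fintype (reflGroup R)]
    (hR : ∀ α ∈ R, dunklReflection α '' (R : Set (EuclideanSpace ℝ (Fin N))) = R)
    (hkG : ∀ σ ∈ reflGroup R, ∀ α ∈ R, k (σ α) = k α) (x : EuclideanSpace ℝ (Fin N)) (s : ℝ)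
    (y : EuclideanSpace ℝ (Fin N)) :
    (wMeasure R k (Metric.closedBall x (Real.sqrt s)))⁻¹ *
        ENNReal.ofReal (Real.exp (-(orbitDist R x y) ^ 2 / s) * V y) ≤
      ∑ σ : reflGroup R, greenEuclidIntegrand R k V (σ.1 x) s y := by
  obtain ⟨σ, hσ, hd⟩ := exists_orbitDist_eq (R := R) x y
  have hnorm : ‖σ⁻¹ x - y‖ = ‖x - σ y‖ := by
    rw [LinearIsometryEquiv.coe_inv, ← σ.norm_map, map_sub, σ.apply_symm_apply]
  calc _ = greenEuclidIntegrand R k V (σ⁻¹ x) s y := by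
        rw [greenEuclidIntegrand, hd, hnorm,
          wMeasure_closedBall_reflGroup_apply hR hkG (inv_mem hσ)]
    _ ≤ _ := Finset.single_le_sum (a := (⟨σ, hσ⟩⁻¹ : reflGroup R))
          (f := fun τ : reflGroup R => greenEuclidIntegrand R k V (τ.1 x) s y)
          (fun _ _ => zero_le) (Finset.mem_univ _)

lemma greenOrbit_le_sum_greenEuclid [Fintype (reflGroup R)]
    (hR : ∀ α ∈ R, dunklReflection α '' (R : Set (EuclideanSpace ℝ (Fin N))) = R)
    (hkG : ∀ σ ∈ reflGroup R, ∀ α ∈ R, k (σ α) = k α) (hV : Measurable V)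
    (x : EuclideanSpace ℝ (Fin N)) :
    greenOrbit R k V x ≤ ∑ σ : reflGroup R, greenEuclid R k V (σ.1 x) := by
  calc greenOrbit R k V x
      ≤ ∫⁻ s in Set.Ioi 0, ∑ σ : reflGroup R,
          ∫⁻ y, greenEuclidIntegrand R k V (σ.1 x) s y ∂wMeasure R k := by
        refine lintegral_mono fun s => ?_
        refine (lintegral_mono (greenOrbit_integrand_le_sum hR hkG x s)).trans_eq ?_
        exact lintegral_finsetSum _ fun σ _ => (measurable_greenEuclidIntegrand hV _).of_uncurry_left
    _ = ∑ σ : reflGroup R, greenEuclid R k V (σ.1 x) :=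
        lintegral_finsetSum _ fun σ _ =>
          (measurable_greenEuclidIntegrand hV _).lintegral_prod_right'

theorem green_kernels_comparable_general {N : ℕ}
    (R : Finset (EuclideanSpace ℝ (Fin N))) (hR : IsNormalizedRootSystem R)
    (k : EuclideanSpace ℝ (Fin N) → ℝ)
    (hkG : ∀ σ ∈ reflGroup R, ∀ α ∈ R, k (σ α) = k α) :
    (∀ V : EuclideanSpace ℝ (Fin N) → ℝ, Measurable V → (∀ y, 0 ≤ V y) →
      ∀ x, greenEuclid R k V x ≤ greenOrbit R k V x) ∧
    ∃ C : ℝ, 0 < C ∧ ∀ V : EuclideanSpace ℝ (Fin N) → ℝ, Measurable V → (∀ y, 0 ≤ V y) →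
      ⨆ x, greenOrbit R k V x ≤ ENNReal.ofReal C * ⨆ x, greenEuclid R k V x := by
  have hroots := hR.2.2.2.1
  have := reflGroup_finite hroots
  let _ := Fintype.ofFinite (reflGroup R)
  refine ⟨fun V _ _ x => greenEuclid_le_greenOrbit R k V x, Fintype.card (reflGroup R),
    by positivity, fun V hV _ => iSup_le fun x => ?_⟩
  calc greenOrbit R k V x ≤ ∑ σ : reflGroup R, greenEuclid R k V (σ.1 x) :=
        greenOrbit_le_sum_greenEuclid hroots hkG hV x
    _ ≤ ∑ _σ : reflGroup R, ⨆ x, greenEuclid R k V x :=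
        Finset.sum_le_sum fun σ _ => le_iSup (greenEuclid R k V) _
    _ = _ := by rw [Finset.sum_const, Finset.card_univ, nsmul_eq_mul, ENNReal.ofReal_natCast]

/-- `𝐆(V) ≤ 𝒢(V)` pointwise, and there is a constant `C > 0`, depending only on `R` and
`k`, such that `sup 𝒢(V) ≤ C · sup 𝐆(V)` for every measurable `V : ℝ^N → [0,∞)`. -/
theorem green_kernels_comparable {N : ℕ} (hN : 1 ≤ N)
    (R : Finset (EuclideanSpace ℝ (Fin N))) (hR : IsNormalizedRootSystem R)
    (k : EuclideanSpace ℝ (Fin N) → ℝ) (hk : ∀ α ∈ R, 0 < k α)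
    (hkG : ∀ σ ∈ reflGroup R, ∀ α ∈ R, k (σ α) = k α) :
    (∀ V : EuclideanSpace ℝ (Fin N) → ℝ, Measurable V → (∀ y, 0 ≤ V y) →
      ∀ x, greenEuclid R k V x ≤ greenOrbit R k V x) ∧
    ∃ C : ℝ, 0 < C ∧ ∀ V : EuclideanSpace ℝ (Fin N) → ℝ, Measurable V → (∀ y, 0 ≤ V y) →
      ⨆ x, greenOrbit R k V x ≤ ENNReal.ofReal C * ⨆ x, greenEuclid R k V x :=
  green_kernels_comparable_general R hR k hkG

end
end

section
/- Let a < b and let f : [a,b] → ℝ be a bounded càdlàg function. Then lim_{n→∞} ((b−a)/n) · Σ_{k=0}^{n−1} f(a + k(b−a)/n) = ∫_a^b f(t) dt, where the right-hand side is the Lebesgue integral. -/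
/-!
The left Riemann sum of mesh `δ` is the integral over `[a, b]` of `f ∘ p_δ`, where `p_δ t` is the
largest grid point `a + k δ` not exceeding `t`. As `δ → 0⁺`, `p_δ t → t` from the left, so
`f ∘ p_δ → f` at every point of left continuity, and dominated convergence (`f` is bounded) gives
the limit as soon as `f` is left continuous almost everywhere. A càdlàg function is left continuous
off a countable set: for each `ε > 0`, just left of a jump of size `≥ ε` the function stays within
`ε / 3` of its left limit, which by right continuity leaves no room for another such jump, so
these jumps are isolated from the left.
-/

open Filter Topology MeasureTheory Set

theorem countable_of_forall_exists_disjoint_Ioo {s : Set ℝ}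
    (h : ∀ t ∈ s, ∃ u < t, Disjoint s (Ioo u t)) : s.Countable := by
  have : ∀ t ∈ s, ∃ q : ℚ, (q : ℝ) < t ∧ Disjoint s (Ioo (q : ℝ) t) := fun t ht ↦ by
    obtain ⟨u, hut, hdisj⟩ := h t ht
    obtain ⟨q, huq, hqt⟩ := exists_rat_btwn hut
    exact ⟨q, hqt, hdisj.mono_right (Ioo_subset_Ioo_left huq.le)⟩
  choose! q hqt hdisj using this
  refine Set.countable_of_injective_of_countable_image (f := q) ?_ (Set.to_countable _)
  intro t ht t' ht' hq
  by_contra hne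
  rcases lt_or_gt_of_ne hne with hlt | hlt
  · exact disjoint_left.1 (hdisj t' ht') ht ⟨hq ▸ hqt t ht, hlt⟩
  · exact disjoint_left.1 (hdisj t ht) ht' ⟨hq ▸ hqt t' ht', hlt⟩

section Jumps

variable {E : Type*} [MetricSpace E] {f : ℝ → E}

theorem countable_setOf_le_dist_leftLim {ε : ℝ} (hε : 0 < ε) :
    {t | ContinuousWithinAt f (Ioi t) t ∧
      ∃ L, Tendsto f (𝓝[<] t) (𝓝 L) ∧ ε ≤ dist (f t) L}.Countable := by
  refine countable_of_forall_exists_disjoint_Ioo ?_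
  rintro t ⟨-, L, hL, -⟩
  obtain ⟨u, hut, hball⟩ := (nhdsLT_basis t).eventually_iff.1
    (hL.eventually (Metric.closedBall_mem_nhds L (by positivity : 0 < ε / 3)))
  refine ⟨u, hut, disjoint_left.2 ?_⟩
  rintro t' ⟨hright, L', hL', hjump⟩ ⟨hut', ht't⟩
  have hL'L : L' ∈ Metric.closedBall L (ε / 3) :=
    Metric.isClosed_closedBall.mem_of_tendsto hL' <| mem_of_superset (Ioo_mem_nhdsLT hut')
      fun x hx ↦ hball ⟨hx.1, hx.2.trans ht't⟩
  have hfL : f t' ∈ Metric.closedBall L (ε / 3) :=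
    Metric.isClosed_closedBall.mem_of_tendsto hright <| mem_of_superset (Ioo_mem_nhdsGT ht't)
      fun x hx ↦ hball ⟨hut'.trans hx.1, hx.2⟩
  have := dist_triangle_right (f t') L' L
  rw [Metric.mem_closedBall] at hL'L hfL
  linarith

theorem countable_setOf_not_continuousWithinAt_Iic :
    {t | ContinuousWithinAt f (Ioi t) t ∧ (∃ L, Tendsto f (𝓝[<] t) (𝓝 L)) ∧
      ¬ContinuousWithinAt f (Iic t) t}.Countable := by
  refine (countable_iUnion fun m : ℕ ↦
    countable_setOf_le_dist_leftLim (f := f) (Nat.one_div_pos_of_nat (n := m))).mono ?_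
  rintro t ⟨hright, ⟨L, hL⟩, hleft⟩
  have hpos : 0 < dist (f t) L := by
    refine dist_pos.2 fun h ↦ hleft ?_
    rw [← h] at hL
    exact continuousWithinAt_Iio_iff_Iic.1 hL
  obtain ⟨m, hm⟩ := exists_nat_one_div_lt hpos
  exact mem_iUnion.2 ⟨m, hright, L, hL, hm.le⟩

end Jumps

noncomputable def leftGridPoint (a δ t : ℝ) : ℝ := a + ⌊(t - a) / δ⌋₊ * δ

section LeftGridPoint

variable {a δ t : ℝ}

theorem leftGridPoint_mem_Icc (hδ : 0 ≤ δ) (ht : a ≤ t) : leftGridPoint a δ t ∈ Icc a t := by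
  have hfloor : (⌊(t - a) / δ⌋₊ : ℝ) * δ ≤ t - a := by
    rcases hδ.eq_or_lt with rfl | hδ
    · simpa using ht
    · exact (le_div_iff₀ hδ).1 (Nat.floor_le (div_nonneg (sub_nonneg.2 ht) hδ.le))
  constructor <;> unfold leftGridPoint <;> nlinarith [Nat.cast_nonneg (α := ℝ) ⌊(t - a) / δ⌋₊]

theorem sub_lt_leftGridPoint (hδ : 0 < δ) : t - δ < leftGridPoint a δ t := by
  have := (div_lt_iff₀ hδ).1 (Nat.lt_floor_add_one ((t - a) / δ))
  unfold leftGridPoint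
  linarith

theorem leftGridPoint_eq_of_mem_Ico (hδ : 0 < δ) {k : ℕ}
    (ht : t ∈ Ico (a + k * δ) (a + (k + 1) * δ)) : leftGridPoint a δ t = a + k * δ := by
  have hk : ⌊(t - a) / δ⌋₊ = k := by
    rw [Nat.floor_eq_iff (div_nonneg (by nlinarith [ht.1, k.cast_nonneg (α := ℝ)]) hδ.le),
      le_div_iff₀ hδ, div_lt_iff₀ hδ]
    constructor <;> linarith [ht.1, ht.2]
  rw [leftGridPoint, hk]

theorem tendsto_leftGridPoint (ht : a ≤ t) :
    Tendsto (fun δ ↦ leftGridPoint a δ t) (𝓝[>] 0) (𝓝[≤] t) := by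
  refine tendsto_nhdsWithin_iff.2 ⟨?_, eventually_nhdsWithin_of_forall fun δ hδ ↦
    (leftGridPoint_mem_Icc (le_of_lt hδ) ht).2⟩
  have hlower : Tendsto (fun δ ↦ t - δ) (𝓝[>] 0) (𝓝 t) :=
    ((continuous_sub_left t).tendsto' 0 t (sub_zero t)).mono_left nhdsWithin_le_nhds
  exact tendsto_of_tendsto_of_tendsto_of_le_of_le' hlower tendsto_const_nhds
    (eventually_nhdsWithin_of_forall fun δ hδ ↦ (sub_lt_leftGridPoint hδ).le)
    (eventually_nhdsWithin_of_forall fun δ hδ ↦ (leftGridPoint_mem_Icc (le_of_lt hδ) ht).2)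

theorem stronglyMeasurable_comp_leftGridPoint {E : Type*} [TopologicalSpace E] (f : ℝ → E)
    (a δ : ℝ) :
    StronglyMeasurable fun t ↦ f (leftGridPoint a δ t) :=
  (StronglyMeasurable.of_discrete (f := fun k : ℕ ↦ f (a + k * δ))).comp_measurable
    (Nat.measurable_floor.comp (by fun_prop))

theorem integral_comp_leftGridPoint {E : Type*} [NormedAddCommGroup E] [NormedSpace ℝ E]
    [CompleteSpace E] (f : ℝ → E) (hδ : 0 < δ) (n : ℕ) :
    ∫ t in a..a + n * δ, f (leftGridPoint a δ t) = δ • ∑ k ∈ Finset.range n, f (a + k * δ) := by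
  have hcell : ∀ k : ℕ, EqOn (fun t ↦ f (leftGridPoint a δ t)) (fun _ ↦ f (a + k * δ))
      (Ico (a + k * δ) (a + (k + 1) * δ)) := fun k t ht ↦ by
    simp only [leftGridPoint_eq_of_mem_Ico hδ ht]
  have hle : ∀ k : ℕ, a + k * δ ≤ a + (k + 1) * δ := fun k ↦ by nlinarith
  have hint : ∀ k : ℕ, ∫ t in a + k * δ..a + (k + 1) * δ, f (leftGridPoint a δ t) =
      δ • f (a + k * δ) := fun k ↦ by
    rw [intervalIntegral.integral_of_le (hle k), ← integral_Ico_eq_integral_Ioc,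
      setIntegral_congr_fun measurableSet_Ico (hcell k), setIntegral_const,
      Real.volume_real_Ico_of_le (hle k)]
    ring_nf
  have := intervalIntegral.sum_integral_adjacent_intervals (μ := volume)
    (f := fun t ↦ f (leftGridPoint a δ t)) (a := fun k : ℕ ↦ a + k * δ) (n := n) fun k _ ↦ by
      push_cast
      rw [intervalIntegrable_iff_integrableOn_Ico_of_le (hle k)]
      exact (integrableOn_const measure_Ico_lt_top.ne).congr_fun (hcell k).symm measurableSet_Ico
  push_cast at this
  simp only [hint, zero_mul, add_zero] at this
  rw [← this, Finset.smul_sum]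

end LeftGridPoint

section Riemann

variable {E : Type*} [NormedAddCommGroup E] [NormedSpace ℝ E] {f : ℝ → E} {a b M : ℝ}

theorem tendsto_integral_comp_leftGridPoint (hab : a ≤ b) (hM : ∀ t ∈ Icc a b, ‖f t‖ ≤ M)
    (hcont : ∀ᵐ t, t ∈ Ioc a b → ContinuousWithinAt f (Iic t) t) :
    Tendsto (fun δ ↦ ∫ t in a..b, f (leftGridPoint a δ t)) (𝓝[>] 0)
      (𝓝 (∫ t in a..b, f t)) := by
  refine intervalIntegral.tendsto_integral_filter_of_dominated_convergence (fun _ ↦ M)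
    (Eventually.of_forall fun δ ↦
      (stronglyMeasurable_comp_leftGridPoint f a δ).aestronglyMeasurable)
    (eventually_nhdsWithin_of_forall fun δ hδ ↦ Eventually.of_forall fun t ht ↦ ?_)
    intervalIntegrable_const ?_
  · rw [uIoc_of_le hab] at ht
    have := leftGridPoint_mem_Icc (a := a) (le_of_lt hδ) ht.1.le
    exact hM _ ⟨this.1, this.2.trans ht.2⟩
  · rw [uIoc_of_le hab]
    filter_upwards [hcont] with t ht hmem
    exact (ht hmem).tendsto.comp (tendsto_leftGridPoint hmem.1.le)

theorem tendsto_leftRiemannSum_of_ae_continuousWithinAt_Iic [CompleteSpace E] (hab : a < b)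
    (hM : ∀ t ∈ Icc a b, ‖f t‖ ≤ M) (hcont : ∀ᵐ t, t ∈ Ioc a b → ContinuousWithinAt f (Iic t) t) :
    Tendsto (fun n : ℕ ↦ ((b - a) / n) • ∑ k ∈ Finset.range n, f (a + k * ((b - a) / n)))
      atTop (𝓝 (∫ t in a..b, f t)) := by
  have hmesh : Tendsto (fun n : ℕ ↦ (b - a) / n) atTop (𝓝[>] 0) :=
    tendsto_nhdsWithin_iff.2 ⟨tendsto_const_div_atTop_nhds_zero_nat _,
      eventually_atTop.2 ⟨1, fun n hn ↦ div_pos (sub_pos.2 hab) (by exact_mod_cast hn)⟩⟩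
  refine ((tendsto_integral_comp_leftGridPoint hab.le hM hcont).comp hmesh).congr' ?_
  filter_upwards [eventually_ge_atTop 1] with n hn
  have hn' : (0 : ℝ) < n := by exact_mod_cast hn
  have := integral_comp_leftGridPoint f (div_pos (sub_pos.2 hab) hn') n (a := a)
  rwa [mul_div_cancel₀ _ hn'.ne', add_sub_cancel] at this

end Riemann

/-- For a bounded càdlàg function `f : [a,b] → ℝ`, the left Riemann sums converge to the
Lebesgue integral: `lim_n ((b−a)/n) Σ_{k=0}^{n−1} f(a + k(b−a)/n) = ∫_a^b f`. -/
theorem riemann_sums_tendsto_integral_of_cadlag (a b : ℝ) (hab : a < b) (f : ℝ → ℝ)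
    (hbdd : ∃ M : ℝ, ∀ t ∈ Set.Icc a b, |f t| ≤ M)
    (hright : ∀ t ∈ Set.Ico a b, Tendsto f (𝓝[>] t) (𝓝 (f t)))
    (hleft : ∀ t ∈ Set.Ioc a b, ∃ L : ℝ, Tendsto f (𝓝[<] t) (𝓝 L)) :
    Tendsto (fun n : ℕ => ((b - a) / n) * ∑ k ∈ Finset.range n, f (a + k * (b - a) / n))
      atTop (𝓝 (∫ t in a..b, f t)) := by
  obtain ⟨M, hM⟩ := hbdd
  have hcont : ∀ᵐ t, t ∈ Ioc a b → ContinuousWithinAt f (Iic t) t := by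
    have hjumps := (countable_setOf_not_continuousWithinAt_Iic (f := f)).insert b
    filter_upwards [hjumps.ae_notMem volume] with t ht hmem
    have htb : t < b := hmem.2.lt_of_ne fun h ↦ ht (Or.inl h)
    by_contra hnot
    exact ht (Or.inr ⟨hright t ⟨hmem.1.le, htb⟩, hleft t hmem, hnot⟩)
  simpa only [smul_eq_mul, mul_div_assoc] using
    tendsto_leftRiemannSum_of_ae_continuousWithinAt_Iic hab (M := M) (by simpa using hM) hcont
end
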